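/- Let t ↦ N(t) ∈ B(X,Y) be strongly measurable on a σ-finite measure space (Ω,μ) such that ∫_Ω ‖N(t)x‖ dμ(t) ≤ C‖x‖ for all x ∈ X. For h ∈ L∞(Ω) define N_h x = ∫_Ω h(t) N(t)x dμ(t). Then the set {N_h : ‖h‖_∞ ≤ 1} is R-bounded with R-bound at most 2C. -/

import Mathlib

/-!
Kahane's inequality `E‖S‖² ≤ 4 (E‖S‖)²` for Rademacher sums `S = Σ εₖ zₖ` reduces the claim to
`L¹` Rademacher averages, where it is an integrated contraction principle: for each `t`,
`E‖Σ εₖ hₖ(t) N(t) xₖ‖ ≤ E‖N(t) (Σ εₖ xₖ)‖` by convexity in each sign separately, and integrating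
in `t` gives `E‖Σ εₖ N_{hₖ} xₖ‖ ≤ C E‖Σ εₖ xₖ‖ ≤ C (E‖Σ εₖ xₖ‖²)^{1/2}`.

Kahane's inequality with constant 2 comes from a Poincaré inequality on the cube. The function
`f(ε) = ‖S(ε)‖` is even, so its variance is at most `1/8` (not just `1/4`) of its edge energy
`Σₖ E (f - f ∘ flipₖ)²`. At `ε`, a norming functional `φ` of `S(ε)` bounds the edge differences by
`2 |φ(zₖ)|`, and Khintchine's inequality `Σ φ(zₖ)² ≤ 3 (E |Σ εₖ φ(zₖ)|)² ≤ 3 (E f)²`, which follows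
from the fourth moment of `Σ εₖ φ(zₖ)`, gives `Var f ≤ 3 (E f)²`.
-/

open MeasureTheory ProbabilityTheory

/-- The Rademacher average `(E‖Σᵢ rᵢ xᵢ‖²)^{1/2}` of a finite sequence in `X`. -/
noncomputable def radAvg {X : Type*} [NormedAddCommGroup X] [NormedSpace ℝ X]
    {n : ℕ} (x : Fin n → X) : ℝ :=
  Real.sqrt (((2 : ℝ) ^ n)⁻¹ *
    ∑ ε : Fin n → Bool, ‖∑ i, (if ε i then (1 : ℝ) else -1) • x i‖ ^ 2)

open Finset

def Bool.sign (b : Bool) : ℝ := if b then 1 else -1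

@[simp] lemma Bool.sign_true : true.sign = 1 := rfl

@[simp] lemma Bool.sign_false : false.sign = -1 := rfl

lemma Bool.sign_not (b : Bool) : (!b).sign = -b.sign := by cases b <;> simp

lemma Bool.abs_sign (b : Bool) : |b.sign| = 1 := by cases b <;> simp

section RademacherSum

variable {E F : Type*} {n : ℕ}

def radSum [AddCommGroup E] [Module ℝ E] (z : Fin n → E) (ε : Fin n → Bool) : E :=
  ∑ i, (ε i).sign • z i

noncomputable def radAvgL1 [NormedAddCommGroup E] [NormedSpace ℝ E] (z : Fin n → E) : ℝ :=
  ((2 : ℝ) ^ n)⁻¹ * ∑ ε, ‖radSum z ε‖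

lemma radAvgL1_nonneg [NormedAddCommGroup E] [NormedSpace ℝ E] (z : Fin n → E) :
    0 ≤ radAvgL1 z := by
  unfold radAvgL1; positivity

lemma radAvg_eq [NormedAddCommGroup E] [NormedSpace ℝ E] (z : Fin n → E) :
    radAvg z = √(((2 : ℝ) ^ n)⁻¹ * ∑ ε, ‖radSum z ε‖ ^ 2) := rfl

variable [AddCommGroup E] [Module ℝ E]

lemma radSum_cons (z : Fin (n + 1) → E) (b : Bool) (ε : Fin n → Bool) :
    radSum z (Fin.cons b ε) = b.sign • z 0 + radSum (Fin.tail z) ε := by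
  simp [radSum, Fin.sum_univ_succ, Fin.tail]

lemma radSum_compl (z : Fin n → E) (ε : Fin n → Bool) : radSum z εᶜ = -radSum z ε := by
  simp [radSum, ← sum_neg_distrib, Bool.sign_not]

lemma radSum_map {G : Type*} [AddCommGroup F] [Module ℝ F] [FunLike G E F]
    [LinearMapClass G ℝ E F] (T : G) (z : Fin n → E) (ε : Fin n → Bool) :
    radSum (fun k => T (z k)) ε = T (radSum z ε) := by
  simp [radSum, map_sum]

lemma card_cube : (Fintype.card (Fin n → Bool) : ℝ) = 2 ^ n := by simp

lemma sum_cube_succ {M : Type*} [AddCommMonoid M] (F : (Fin (n + 1) → Bool) → M) :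
    ∑ η, F η = ∑ ε, F (Fin.cons true ε) + ∑ ε, F (Fin.cons false ε) := by
  rw [← (Fin.consEquiv fun _ => Bool).sum_comp, Fintype.sum_prod_type, Fintype.sum_bool]
  rfl

lemma sum_compl {M : Type*} [AddCommMonoid M] (F : (Fin n → Bool) → M) :
    ∑ η, F ηᶜ = ∑ η, F η :=
  Equiv.sum_comp (compl_involutive.toPerm _) F

lemma Fin.cons_compl (b : Bool) (ε : Fin n → Bool) :
    (Fin.cons b ε : Fin (n + 1) → Bool)ᶜ = Fin.cons (!b) εᶜ := by
  ext i
  cases i using Fin.cases <;> rfl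

def flipAt (k : Fin n) (η : Fin n → Bool) : Fin n → Bool := Function.update η k (!η k)

lemma flipAt_involutive (k : Fin n) : Function.Involutive (flipAt k) := fun η => by
  simp [flipAt]

lemma sum_flipAt {M : Type*} [AddCommMonoid M] (k : Fin n) (F : (Fin n → Bool) → M) :
    ∑ η, F (flipAt k η) = ∑ η, F η :=
  Equiv.sum_comp ((flipAt_involutive k).toPerm _) F

lemma flipAt_zero_cons (b : Bool) (ε : Fin n → Bool) :
    flipAt 0 (Fin.cons b ε) = Fin.cons (!b) ε := by
  simp [flipAt, Fin.update_cons_zero]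

lemma flipAt_succ_cons (j : Fin n) (b : Bool) (ε : Fin n → Bool) :
    flipAt j.succ (Fin.cons b ε) = Fin.cons b (flipAt j ε) := by
  simp [flipAt, Fin.cons_update]

lemma sum_cube_succ_radSum {M : Type*} [AddCommMonoid M] (z : Fin (n + 1) → E) (F : E → M) :
    ∑ η, F (radSum z η) =
      ∑ ε, (F (radSum (Fin.tail z) ε + z 0) + F (radSum (Fin.tail z) ε - z 0)) := by
  simp [sum_cube_succ, radSum_cons, sum_add_distrib, add_comm, neg_add_eq_sub]

lemma radSum_sub_radSum_flipAt (z : Fin n → E) (k : Fin n) (η : Fin n → Bool) :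
    radSum z η - radSum z (flipAt k η) = (2 * (η k).sign) • z k := by
  rw [radSum, radSum, ← sum_sub_distrib, sum_eq_single k]
  · simp [flipAt, Bool.sign_not, two_mul, add_smul]
  · intro i _ hi
    simp [flipAt, hi]
  · simp

end RademacherSum

section Khintchine

variable {n : ℕ}

lemma sum_radSum_sq (c : Fin n → ℝ) :
    ∑ ε, radSum c ε ^ 2 = 2 ^ n * ∑ k, c k ^ 2 := by
  induction n with
  | zero => simp [radSum]
  | succ n ih =>
    calc ∑ η, radSum c η ^ 2
        = ∑ ε, (2 * c 0 ^ 2 + 2 * radSum (Fin.tail c) ε ^ 2) := by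
          rw [sum_cube_succ_radSum c (· ^ 2)]
          exact sum_congr rfl fun ε _ => by ring
      _ = 2 ^ (n + 1) * ∑ k, c k ^ 2 := by
          rw [sum_add_distrib, sum_const, card_univ, nsmul_eq_mul, card_cube, ← mul_sum, ih,
            Fin.sum_univ_succ]
          simp only [Fin.tail]
          ring

lemma sum_radSum_pow_four_le (c : Fin n → ℝ) :
    ∑ ε, radSum c ε ^ 4 ≤ 3 * 2 ^ n * (∑ k, c k ^ 2) ^ 2 := by
  induction n with
  | zero => simp [radSum]
  | succ n ih =>
    have h2 := sum_radSum_sq (Fin.tail c)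
    have h4 := ih (Fin.tail c)
    calc ∑ η, radSum c η ^ 4
        = ∑ ε, (2 * c 0 ^ 4 + 12 * c 0 ^ 2 * radSum (Fin.tail c) ε ^ 2
            + 2 * radSum (Fin.tail c) ε ^ 4) := by
          rw [sum_cube_succ_radSum c (· ^ 4)]
          exact sum_congr rfl fun ε _ => by ring
      _ = 2 ^ n * 2 * c 0 ^ 4 + 12 * c 0 ^ 2 * ∑ ε, radSum (Fin.tail c) ε ^ 2
            + 2 * ∑ ε, radSum (Fin.tail c) ε ^ 4 := by
          rw [sum_add_distrib, sum_add_distrib, sum_const, card_univ, nsmul_eq_mul, card_cube,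
            ← mul_sum, ← mul_sum]
          ring
      _ ≤ 3 * 2 ^ (n + 1) * (∑ k, c k ^ 2) ^ 2 := by
          simp only [Fin.tail] at h2 h4
          rw [Fin.sum_univ_succ, h2, pow_succ 2 n]
          linear_combination 2 * h4 + 4 * (by positivity : (0 : ℝ) ≤ 2 ^ n * c 0 ^ 4)

theorem card_mul_sum_sq_le_of_card_mul_sum_pow_four_le {ι : Type*} (s : Finset ι) (g : ι → ℝ)
    {K : ℝ} (hK : 0 ≤ K) (h : #s * ∑ i ∈ s, g i ^ 4 ≤ K * (∑ i ∈ s, g i ^ 2) ^ 2) :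
    #s * ∑ i ∈ s, g i ^ 2 ≤ K * (∑ i ∈ s, |g i|) ^ 2 := by
  set A := ∑ i ∈ s, |g i|
  set B := ∑ i ∈ s, g i ^ 2
  set T := ∑ i ∈ s, |g i| ^ 3
  set D := ∑ i ∈ s, g i ^ 4
  have hBAT : B ^ 2 ≤ A * T := sum_sq_le_sum_mul_sum_of_sq_le_mul s
    (fun i _ => abs_nonneg _) (fun i _ => by positivity) fun i _ =>
      le_of_eq (by rw [← sq_abs (g i)]; ring)
  have hTBD : T ^ 2 ≤ B * D := sum_sq_le_sum_mul_sum_of_sq_le_mul s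
    (fun i _ => by positivity) (fun i _ => by positivity) fun i _ =>
      le_of_eq (by rw [← pow_mul, (by decide : Even (3 * 2)).pow_abs]; ring)
  obtain hB | hB := eq_or_lt_of_le (show 0 ≤ B from sum_nonneg fun i _ => sq_nonneg (g i))
  · rw [← hB, mul_zero]; positivity
  have hA : 0 ≤ A := sum_nonneg fun i _ => abs_nonneg _
  refine le_of_mul_le_mul_left ?_ (pow_pos hB 3)
  calc B ^ 3 * (#s * B) = #s * (B ^ 2) ^ 2 := by ring
    _ ≤ #s * (A * T) ^ 2 := by gcongr
    _ = #s * A ^ 2 * T ^ 2 := by ring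
    _ ≤ #s * A ^ 2 * (B * D) := by gcongr
    _ = A ^ 2 * B * (#s * D) := by ring
    _ ≤ A ^ 2 * B * (K * B ^ 2) := by gcongr
    _ = B ^ 3 * (K * A ^ 2) := by ring

theorem sum_sq_le_three_mul_radAvgL1_sq (c : Fin n → ℝ) : ∑ k, c k ^ 2 ≤ 3 * radAvgL1 c ^ 2 := by
  have h := card_mul_sum_sq_le_of_card_mul_sum_pow_four_le univ (radSum c) (K := 3) (by norm_num)
    (by
      rw [card_univ, card_cube, sum_radSum_sq]
      exact (mul_le_mul_of_nonneg_left (sum_radSum_pow_four_le c) (by positivity)).trans_eq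
        (by ring))
  rw [card_univ, card_cube, sum_radSum_sq] at h
  simp only [radAvgL1, Real.norm_eq_abs]
  rw [mul_pow, inv_pow, mul_left_comm, le_inv_mul_iff₀ (by positivity)]
  linarith

end Khintchine

section Poincare

variable {n : ℕ}

lemma sum_eq_sum_of_add_compl_eq {F G : (Fin n → Bool) → ℝ}
    (h : ∀ η, F η + F ηᶜ = G η + G ηᶜ) : ∑ η, F η = ∑ η, G η := by
  have := sum_congr rfl fun η (_ : η ∈ univ) => h η
  rw [sum_add_distrib, sum_add_distrib, sum_compl, sum_compl] at this
  linarith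

lemma poincare_flipAt_compl_step (u v : (Fin n → Bool) → ℝ) :
    4 * (∑ ε, u ε - ∑ ε, v ε) ^ 2 + 2 ^ n * (∑ ε, (u ε - u εᶜ) ^ 2 + ∑ ε, (v ε - v εᶜ) ^ 2) ≤
      2 ^ n * (∑ ε, (u ε - v ε) ^ 2 + ∑ ε, (v ε - u ε) ^ 2 + ∑ ε, (u ε - v εᶜ) ^ 2 +
        ∑ ε, (v ε - u εᶜ) ^ 2) := by
  set W : (Fin n → Bool) → ℝ := fun ε => u ε + u εᶜ - v ε - v εᶜ
  have hsumW : ∑ ε, W ε = 2 * (∑ ε, u ε - ∑ ε, v ε) := by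
    simp only [W, sum_sub_distrib, sum_add_distrib, sum_compl (u ·), sum_compl (v ·)]
    ring
  have hW : (∑ ε, W ε) ^ 2 ≤ 2 ^ n * ∑ ε, W ε ^ 2 := by
    simpa using sq_sum_le_card_mul_sum_sq (s := univ) (f := W)
  have hident : ∑ ε, (u ε - u εᶜ) ^ 2 + ∑ ε, (v ε - v εᶜ) ^ 2 + ∑ ε, W ε ^ 2 =
      ∑ ε, (u ε - v ε) ^ 2 + ∑ ε, (v ε - u ε) ^ 2 + ∑ ε, (u ε - v εᶜ) ^ 2 +
        ∑ ε, (v ε - u εᶜ) ^ 2 := by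
    simp only [← sum_add_distrib]
    exact sum_eq_sum_of_add_compl_eq fun ε => by simp only [W, compl_compl]; ring
  rw [hsumW] at hW
  linear_combination hW + 2 ^ n * hident

theorem poincare_flipAt_compl (G : (Fin n → Bool) → ℝ) :
    8 * (2 ^ n * ∑ η, G η ^ 2 - (∑ η, G η) ^ 2) ≤
      2 ^ n * (∑ k, ∑ η, (G η - G (flipAt k η)) ^ 2 + ∑ η, (G η - G ηᶜ) ^ 2) := by
  induction n with
  | zero => simp [show ∀ η : Fin 0 → Bool, ηᶜ = η from fun _ => Subsingleton.elim _ _]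
  | succ n ih =>
    have hstep := poincare_flipAt_compl_step
      (G <| Fin.cons true ·) (G <| Fin.cons false ·)
    simp only [sum_cube_succ, Fin.sum_univ_succ, flipAt_zero_cons, flipAt_succ_cons,
      Fin.cons_compl, sum_add_distrib, Bool.not_true, Bool.not_false]
    rw [pow_succ]
    linear_combination 2 * ih (G <| Fin.cons true ·) + 2 * ih (G <| Fin.cons false ·) + 2 * hstep

end Poincare

section Kahane

lemma sq_le_sq_add_sq_of_le_of_neg_le {d a b : ℝ} (ha : d ≤ a) (hb : -d ≤ b) :
    d ^ 2 ≤ a ^ 2 + b ^ 2 := by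
  rcases le_total 0 d with hd | hd <;> nlinarith

variable {E F : Type*} [NormedAddCommGroup E] [NormedSpace ℝ E] {n : ℕ}

lemma radAvgL1_map_le [NormedAddCommGroup F] [NormedSpace ℝ F] (T : E →L[ℝ] F)
    (z : Fin n → E) : radAvgL1 (fun k => T (z k)) ≤ ‖T‖ * radAvgL1 z := by
  simp only [radAvgL1, mul_left_comm ‖T‖, mul_sum]
  gcongr with ε
  rw [radSum_map]
  exact T.le_opNorm _

lemma sum_sum_sq_norm_radSum_sub_flipAt_le (z : Fin n → E)
    (φ : (Fin n → Bool) → StrongDual ℝ E) (hφ : ∀ η, ‖φ η‖ ≤ 1)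
    (hφz : ∀ η, φ η (radSum z η) = ‖radSum z η‖) :
    ∑ k, ∑ η, (‖radSum z η‖ - ‖radSum z (flipAt k η)‖) ^ 2 ≤ 8 * ∑ η, ∑ k, φ η (z k) ^ 2 := by
  have hφle : ∀ η x, φ η x ≤ ‖x‖ := fun η x =>
    (le_abs_self _).trans <| by simpa using (φ η).le_of_opNorm_le (hφ η) x
  have hone : ∀ k η, ‖radSum z η‖ - ‖radSum z (flipAt k η)‖ ≤ 2 * |φ η (z k)| := fun k η =>
    calc ‖radSum z η‖ - ‖radSum z (flipAt k η)‖
        ≤ φ η (radSum z η) - φ η (radSum z (flipAt k η)) := by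
          rw [hφz]; exact sub_le_sub_left (hφle η _) _
      _ = 2 * (η k).sign * φ η (z k) := by
          rw [← map_sub, radSum_sub_radSum_flipAt, map_smul, smul_eq_mul]
      _ ≤ 2 * |φ η (z k)| := by
          simpa [abs_mul, Bool.abs_sign] using le_abs_self (2 * (η k).sign * φ η (z k))
  have htwo : ∀ k η, (‖radSum z η‖ - ‖radSum z (flipAt k η)‖) ^ 2 ≤
      4 * φ η (z k) ^ 2 + 4 * φ (flipAt k η) (z k) ^ 2 := fun k η => by
    have h₁ := hone k η
    have h₂ := hone k (flipAt k η)
    rw [flipAt_involutive k η, ← neg_sub] at h₂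
    simpa only [mul_pow, sq_abs, show (2 : ℝ) ^ 2 = 4 by norm_num] using
      sq_le_sq_add_sq_of_le_of_neg_le h₁ h₂
  calc ∑ k, ∑ η, (‖radSum z η‖ - ‖radSum z (flipAt k η)‖) ^ 2
      ≤ ∑ k, ∑ η, (4 * φ η (z k) ^ 2 + 4 * φ (flipAt k η) (z k) ^ 2) := by
        gcongr with k _ η
        exact htwo k η
    _ = ∑ k, 8 * ∑ η, φ η (z k) ^ 2 := sum_congr rfl fun k _ => by
      rw [sum_add_distrib, ← mul_sum, ← mul_sum, sum_flipAt k (fun η => φ η (z k) ^ 2)]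
      ring
    _ = 8 * ∑ η, ∑ k, φ η (z k) ^ 2 := by rw [← mul_sum, sum_comm]

theorem radAvg_le_two_mul_radAvgL1 (z : Fin n → E) : radAvg z ≤ 2 * radAvgL1 z := by
  choose φ hφ hφz using fun η => exists_dual_vector'' ℝ (radSum z η)
  have hQ : (0 : ℝ) < 2 ^ n := by positivity
  have hsum : ∑ η, ‖radSum z η‖ = 2 ^ n * radAvgL1 z := by
    rw [radAvgL1, mul_inv_cancel_left₀ hQ.ne']
  have hpoinc := poincare_flipAt_compl fun η => ‖radSum z η‖
  simp only [radSum_compl, norm_neg, sub_self, hsum, zero_pow two_ne_zero, sum_const_zero,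
    add_zero] at hpoinc
  have hflip := sum_sum_sq_norm_radSum_sub_flipAt_le z φ hφ (by simpa using hφz)
  have hkh : ∑ η, ∑ k, φ η (z k) ^ 2 ≤ 2 ^ n * (3 * radAvgL1 z ^ 2) := by
    have hη : ∀ η, ∑ k, φ η (z k) ^ 2 ≤ 3 * radAvgL1 z ^ 2 := fun η =>
      (sum_sq_le_three_mul_radAvgL1_sq fun k => φ η (z k)).trans <| by
        gcongr
        · exact radAvgL1_nonneg _
        exact (radAvgL1_map_le (φ η) z).trans
          (mul_le_of_le_one_left (radAvgL1_nonneg z) (hφ η))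
    simpa [card_cube] using sum_le_sum fun η (_ : η ∈ univ) => hη η
  have hsq : ∑ η, ‖radSum z η‖ ^ 2 ≤ 2 ^ n * (2 * radAvgL1 z) ^ 2 := by
    refine le_of_mul_le_mul_left ?_ (by positivity : (0 : ℝ) < 8 * 2 ^ n)
    linear_combination hpoinc + 2 ^ n * hflip + 8 * 2 ^ n * hkh
  rw [radAvg_eq, Real.sqrt_le_iff]
  refine ⟨mul_nonneg zero_le_two (radAvgL1_nonneg z), ?_⟩
  rwa [inv_mul_le_iff₀ hQ]

theorem radAvgL1_le_radAvg (z : Fin n → E) : radAvgL1 z ≤ radAvg z := by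
  have hQ : (0 : ℝ) < 2 ^ n := by positivity
  have hcs : (∑ ε, ‖radSum z ε‖) ^ 2 ≤ 2 ^ n * ∑ ε, ‖radSum z ε‖ ^ 2 := by
    simpa using sq_sum_le_card_mul_sum_sq (s := univ) (f := fun ε => ‖radSum z ε‖)
  rw [radAvg_eq, Real.le_sqrt (radAvgL1_nonneg z) (by positivity), radAvgL1]
  calc (((2 : ℝ) ^ n)⁻¹ * ∑ ε, ‖radSum z ε‖) ^ 2
      = ((2 : ℝ) ^ n)⁻¹ * (((2 : ℝ) ^ n)⁻¹ * (∑ ε, ‖radSum z ε‖) ^ 2) := by ring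
    _ ≤ ((2 : ℝ) ^ n)⁻¹ * (((2 : ℝ) ^ n)⁻¹ * (2 ^ n * ∑ ε, ‖radSum z ε‖ ^ 2)) := by gcongr
    _ = ((2 : ℝ) ^ n)⁻¹ * ∑ ε, ‖radSum z ε‖ ^ 2 := by rw [inv_mul_cancel_left₀ hQ.ne']

end Kahane

section Contraction

variable {E : Type*} [AddCommGroup E] [Module ℝ E] {n : ℕ}

lemma ConvexOn.add_smul_add_sub_smul_le {φ : E → ℝ} (hφ : ConvexOn ℝ Set.univ φ) (x v : E)
    {a : ℝ} (ha : |a| ≤ 1) : φ (x + a • v) + φ (x - a • v) ≤ φ (x + v) + φ (x - v) := by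
  obtain ⟨ha₁, ha₂⟩ := abs_le.1 ha
  have hθ : 0 ≤ (1 + a) / 2 := by linarith
  have hθ' : 0 ≤ (1 - a) / 2 := by linarith
  have h₁ := hφ.2 (Set.mem_univ (x + v)) (Set.mem_univ (x - v)) hθ hθ' (by ring)
  have h₂ := hφ.2 (Set.mem_univ (x + v)) (Set.mem_univ (x - v)) hθ' hθ (by ring)
  have e₁ : ((1 + a) / 2) • (x + v) + ((1 - a) / 2) • (x - v) = x + a • v := by module
  have e₂ : ((1 - a) / 2) • (x + v) + ((1 + a) / 2) • (x - v) = x - a • v := by module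
  rw [e₁, smul_eq_mul, smul_eq_mul] at h₁
  rw [e₂, smul_eq_mul, smul_eq_mul] at h₂
  linarith

theorem ConvexOn.sum_radSum_smul_le {φ : E → ℝ} (hφ : ConvexOn ℝ Set.univ φ) {a : Fin n → ℝ}
    (ha : ∀ i, |a i| ≤ 1) (z : Fin n → E) :
    ∑ ε, φ (radSum (fun i => a i • z i) ε) ≤ ∑ ε, φ (radSum z ε) := by
  induction n generalizing φ with
  | zero => simp [radSum]
  | succ n ih =>
    have htail := fun c : E => ih (hφ.translate_left c) (fun i => ha i.succ) (Fin.tail z)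
    rw [sum_cube_succ_radSum, sum_cube_succ_radSum]
    calc ∑ ε, (φ (radSum (Fin.tail fun i => a i • z i) ε + a 0 • z 0) +
          φ (radSum (Fin.tail fun i => a i • z i) ε - a 0 • z 0))
        ≤ ∑ ε, (φ (radSum (Fin.tail z) ε + a 0 • z 0) +
            φ (radSum (Fin.tail z) ε - a 0 • z 0)) := by
          simp only [sub_eq_add_neg, sum_add_distrib]
          exact add_le_add (htail _) (htail _)
      _ ≤ ∑ ε, (φ (radSum (Fin.tail z) ε + z 0) + φ (radSum (Fin.tail z) ε - z 0)) :=
          sum_le_sum fun ε _ => hφ.add_smul_add_sub_smul_le _ _ (ha 0)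

end Contraction

section IntegralMeans

variable {Ω X Y : Type*} [MeasurableSpace Ω] {μ : Measure Ω}
  [NormedAddCommGroup X] [NormedSpace ℝ X] [NormedAddCommGroup Y] [NormedSpace ℝ Y] {n : ℕ}

lemma integral_radSum {F : Fin n → Ω → Y} (hF : ∀ k, Integrable (F k) μ) (ε : Fin n → Bool) :
    ∫ t, radSum (fun k => F k t) ε ∂μ = radSum (fun k => ∫ t, F k t ∂μ) ε := by
  simp only [radSum]
  rw [integral_finsetSum (f := fun k t => (ε k).sign • F k t) _ fun k _ => (hF k).smul _]
  simp only [integral_smul]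

theorem radAvgL1_integral_smul_apply_le (N : Ω → X →L[ℝ] Y) {C : ℝ}
    (hint : ∀ x, Integrable (fun t => N t x) μ) (hbound : ∀ x, ∫ t, ‖N t x‖ ∂μ ≤ C * ‖x‖)
    {h : Fin n → Ω → ℝ} (hmeas : ∀ k, Measurable (h k)) (hh : ∀ k t, |h k t| ≤ 1)
    (x : Fin n → X) :
    radAvgL1 (fun k => ∫ t, h k t • N t (x k) ∂μ) ≤ C * radAvgL1 x := by
  have hF : ∀ k, Integrable (fun t => h k t • N t (x k)) μ := fun k =>
    (hint (x k)).bdd_smul 1 (hmeas k).aestronglyMeasurable (ae_of_all _ fun t => hh k t)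
  have hS : ∀ ε, Integrable (fun t => ‖radSum (fun k => h k t • N t (x k)) ε‖) μ := fun ε =>
    (integrable_finsetSum _ fun k _ => (hF k).smul _).norm
  rw [radAvgL1, radAvgL1, mul_left_comm]
  gcongr
  calc ∑ ε, ‖radSum (fun k => ∫ t, h k t • N t (x k) ∂μ) ε‖
      = ∑ ε, ‖∫ t, radSum (fun k => h k t • N t (x k)) ε ∂μ‖ := by simp only [integral_radSum hF]
    _ ≤ ∑ ε, ∫ t, ‖radSum (fun k => h k t • N t (x k)) ε‖ ∂μ :=
        sum_le_sum fun ε _ => norm_integral_le_integral_norm _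
    _ = ∫ t, ∑ ε, ‖radSum (fun k => h k t • N t (x k)) ε‖ ∂μ :=
        (integral_finsetSum _ fun ε _ => hS ε).symm
    _ ≤ ∫ t, ∑ ε, ‖N t (radSum x ε)‖ ∂μ := by
        refine integral_mono (integrable_finsetSum _ fun ε _ => hS ε)
          (integrable_finsetSum _ fun ε _ => (hint _).norm) fun t => ?_
        simpa only [radSum_map] using
          (convexOn_norm convex_univ).sum_radSum_smul_le (fun k => hh k t) fun k => N t (x k)
    _ = ∑ ε, ∫ t, ‖N t (radSum x ε)‖ ∂μ :=
        integral_finsetSum _ fun ε _ => (hint _).norm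
    _ ≤ ∑ ε, C * ‖radSum x ε‖ := sum_le_sum fun ε _ => hbound _
    _ = C * ∑ ε, ‖radSum x ε‖ := (mul_sum _ _ _).symm

end IntegralMeans

theorem integral_means_Rbounded_of_uniformly_integrable_general
    {Ω X Y : Type*} [MeasurableSpace Ω]
    [NormedAddCommGroup X] [NormedSpace ℝ X] [NormedAddCommGroup Y] [NormedSpace ℝ Y]
    (μ : Measure Ω) (N : Ω → X →L[ℝ] Y) (C : ℝ)
    (hint : ∀ x : X, Integrable (fun t => N t x) μ)
    (hbound : ∀ x : X, (∫ t, ‖N t x‖ ∂μ) ≤ C * ‖x‖) :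
    ∀ (m : ℕ) (h : Fin m → Ω → ℝ),
      (∀ k, Measurable (h k)) → (∀ k t, |h k t| ≤ 1) →
      ∀ x : Fin m → X,
        radAvg (fun k => ∫ t, h k t • N t (x k) ∂μ) ≤ 2 * C * radAvg x := by
  intro m h hmeas hh x
  rcases le_or_gt 0 C with hC | hC
  · calc radAvg (fun k => ∫ t, h k t • N t (x k) ∂μ)
        ≤ 2 * radAvgL1 (fun k => ∫ t, h k t • N t (x k) ∂μ) := radAvg_le_two_mul_radAvgL1 _
      _ ≤ 2 * (C * radAvgL1 x) := by
          gcongr; exact radAvgL1_integral_smul_apply_le N hint hbound hmeas hh x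
      _ ≤ 2 * C * radAvg x := by
          rw [← mul_assoc]; gcongr; exact radAvgL1_le_radAvg x
  · obtain rfl : x = 0 := funext fun k => norm_le_zero_iff.1 <| by
      have : 0 ≤ ∫ t, ‖N t (x k)‖ ∂μ := integral_nonneg fun t => norm_nonneg _
      nlinarith [hbound (x k), norm_nonneg (x k)]
    simp [radAvg]

/-- If `t ↦ N(t) ∈ B(X,Y)` is strongly measurable with `∫‖N(t)x‖dμ(t) ≤ C‖x‖`, then
the integral means `N_h x = ∫ h(t) N(t)x dμ(t)`, for `‖h‖_∞ ≤ 1`, form an R-bounded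
family with R-bound at most `2C`. -/
theorem integral_means_Rbounded_of_uniformly_integrable
    {Ω X Y : Type*} [MeasurableSpace Ω]
    [NormedAddCommGroup X] [NormedSpace ℝ X] [NormedAddCommGroup Y] [NormedSpace ℝ Y]
    (μ : Measure Ω) [SigmaFinite μ] (N : Ω → X →L[ℝ] Y) (C : ℝ)
    (hmeas : ∀ x : X, StronglyMeasurable fun t => N t x)
    (hint : ∀ x : X, Integrable (fun t => N t x) μ)
    (hbound : ∀ x : X, (∫ t, ‖N t x‖ ∂μ) ≤ C * ‖x‖) :
    ∀ (m : ℕ) (h : Fin m → Ω → ℝ),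
      (∀ k, Measurable (h k)) → (∀ k t, |h k t| ≤ 1) →
      ∀ x : Fin m → X,
        radAvg (fun k => ∫ t, h k t • N t (x k) ∂μ) ≤ 2 * C * radAvg x :=
  integral_means_Rbounded_of_uniformly_integrable_general μ N C hint hbound
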